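/- arXiv:1903.08021 — 2 statements merged into one kernel-verified Lean document; each statement's English description precedes it below -/
import Mathlib

section
/- Let p ∈ (0,1), h_0 = 2p-1, I_p(x) = ((1+x)/2)·log((1+x)/(2p)) + ((1-x)/2)·log((1-x)/(2(1-p))) for x ∈ (-1,1), and w_p(x,u) = 2|I_p'(u)|·1_{x(h_0-u)<0} for x ∈ {-1,1}, u ∈ [-1,1]. Let U be uniformly distributed on [-1,1]. Then for every t ∈ ℝ, E[max_{x ∈ {-1,1}} (t·x - w_p(x,U))] = log(p·e^t + (1-p)·e^{-t}). -/
open MeasureTheory Real Set ENNReal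
open scoped Classical

/-- The uniform probability measure on `[-1, 1]`. -/
noncomputable def uniformIcc : Measure ℝ :=
  (2 : ℝ≥0∞)⁻¹ • volume.restrict (Set.Icc (-1 : ℝ) 1)

/-- The (real-valued) cost `w_p(x, u) = 2 |I_p'(u)| 1_{x (h₀ - u) < 0}` with `h₀ = 2p - 1`,
where `2 |I_p'(u)| = |log ((1+u)(1-p) / ((1-u)p))|` for `u ∈ (-1, 1)`. -/
noncomputable def wReal (p x u : ℝ) : ℝ :=
  if x * ((2 * p - 1) - u) < 0 then |Real.log ((1 + u) * (1 - p) / ((1 - u) * p))| else 0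

namespace BernoulliAux

/-- `g p u = log((1+u)(1-p)/((1-u)p))`. -/
noncomputable def g (p u : ℝ) : ℝ := Real.log ((1 + u) * (1 - p) / ((1 - u) * p))

/-- antiderivative of `g p` on `(-1,1)`. -/
noncomputable def G (p u : ℝ) : ℝ :=
  (1 + u) * Real.log (1 + u) + (1 - u) * Real.log (1 - u) +
    u * (Real.log (1 - p) - Real.log p)

/-- the point where `g p u = 2 s`. -/
noncomputable def uS (p s : ℝ) : ℝ :=
  (p * Real.exp (2 * s) - (1 - p)) / (p * Real.exp (2 * s) + (1 - p))

lemma ae_ne (c : ℝ) : ∀ᵐ u : ℝ, u ≠ c := by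
  have h : {u : ℝ | ¬ u ≠ c} = {c} := by ext x; simp
  rw [ae_iff, h]
  exact measure_singleton c

variable {p : ℝ}

lemma g_eq (hp : p ∈ Set.Ioo (0:ℝ) 1) {u : ℝ} (hu : u ∈ Set.Ioo (-1:ℝ) 1) :
    g p u = Real.log (1 + u) - Real.log (1 - u) + (Real.log (1 - p) - Real.log p) := by
  have h1 : (0:ℝ) < 1 + u := by linarith [hu.1]
  have h2 : (0:ℝ) < 1 - u := by linarith [hu.2]
  have h3 : (0:ℝ) < 1 - p := by linarith [hp.2]
  have h4 : (0:ℝ) < p := hp.1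
  rw [g, Real.log_div (by positivity) (by positivity),
    Real.log_mul h1.ne' h3.ne', Real.log_mul h2.ne' h4.ne']
  ring

lemma g_le_iff (hp : p ∈ Set.Ioo (0:ℝ) 1) {u : ℝ} (hu : u ∈ Set.Ioo (-1:ℝ) 1) (s : ℝ) :
    g p u ≤ 2 * s ↔ u ≤ uS p s := by
  have h1 : (0:ℝ) < 1 + u := by linarith [hu.1]
  have h2 : (0:ℝ) < 1 - u := by linarith [hu.2]
  have h3 : (0:ℝ) < 1 - p := by linarith [hp.2]
  have h4 : (0:ℝ) < p := hp.1
  have hE : (0:ℝ) < Real.exp (2*s) := Real.exp_pos _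
  have hD : (0:ℝ) < p * Real.exp (2*s) + (1 - p) := by nlinarith
  rw [g, Real.log_le_iff_le_exp (by positivity), div_le_iff₀ (by positivity),
    uS, le_div_iff₀ hD]
  constructor <;> intro h <;> nlinarith

lemma g_ge_iff (hp : p ∈ Set.Ioo (0:ℝ) 1) {u : ℝ} (hu : u ∈ Set.Ioo (-1:ℝ) 1) (s : ℝ) :
    2 * s ≤ g p u ↔ uS p s ≤ u := by
  have h1 : (0:ℝ) < 1 + u := by linarith [hu.1]
  have h2 : (0:ℝ) < 1 - u := by linarith [hu.2]
  have h3 : (0:ℝ) < 1 - p := by linarith [hp.2]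
  have h4 : (0:ℝ) < p := hp.1
  have hE : (0:ℝ) < Real.exp (2*s) := Real.exp_pos _
  have hD : (0:ℝ) < p * Real.exp (2*s) + (1 - p) := by nlinarith
  rw [g, Real.le_log_iff_exp_le (by positivity), uS, div_le_iff₀ hD,
    le_div_iff₀ (by positivity : (0:ℝ) < (1 - u) * p)]
  constructor <;> intro h <;> nlinarith

lemma uS_zero (hp : p ∈ Set.Ioo (0:ℝ) 1) : uS p 0 = 2 * p - 1 := by
  rw [uS]
  norm_num [Real.exp_zero]
  ring

lemma max_eq (hp : p ∈ Set.Ioo (0:ℝ) 1) {u : ℝ} (hu : u ∈ Set.Ioo (-1:ℝ) 1) (t : ℝ) :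
    max (t * 1 - wReal p 1 u) (t * (-1) - wReal p (-1) u)
      = (|g p u - 2 * t| - |g p u|) / 2 := by
  have hw1 : wReal p 1 u = if (1:ℝ) * ((2 * p - 1) - u) < 0 then |g p u| else 0 := rfl
  have hw2 : wReal p (-1) u = if (-1:ℝ) * ((2 * p - 1) - u) < 0 then |g p u| else 0 := rfl
  have hlt : g p u < 2 * 0 ↔ u < uS p 0 := lt_iff_lt_of_le_iff_le (g_ge_iff hp hu 0)
  have hgt : 2 * 0 < g p u ↔ uS p 0 < u := lt_iff_lt_of_le_iff_le (g_le_iff hp hu 0)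
  rw [uS_zero hp] at hlt hgt
  norm_num at hlt hgt
  rw [hw1, hw2]
  rcases lt_trichotomy u (2 * p - 1) with h | h | h
  · have hg : g p u < 0 := hlt.2 h
    rw [if_neg (by simp only [one_mul]; push_neg; linarith),
      if_pos (by simp only [neg_one_mul]; linarith)]
    rw [show |g p u| = -g p u from abs_of_neg hg]
    rcases le_or_gt (g p u) (2 * t) with hc | hc
    · rw [show |g p u - 2 * t| = -(g p u - 2 * t) from abs_of_nonpos (by linarith),
        max_eq_left (by linarith : t * (-1) - -g p u ≤ t * 1 - 0)]
      ring
    · rw [show |g p u - 2 * t| = g p u - 2 * t from abs_of_pos (by linarith),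
        max_eq_right (by linarith : t * 1 - 0 ≤ t * (-1) - -g p u)]
      ring
  · have hgle : g p u ≤ 0 := not_lt.1 (fun hc => absurd (hgt.1 hc) (by linarith))
    have hgge : (0:ℝ) ≤ g p u := not_lt.1 (fun hc => absurd (hlt.1 hc) (by linarith))
    have hg : g p u = 0 := le_antisymm hgle hgge
    rw [if_neg (by simp only [one_mul]; push_neg; linarith),
      if_neg (by simp only [neg_one_mul]; push_neg; linarith), hg]
    rcases le_total 0 t with hc | hc
    · rw [show |(0:ℝ) - 2 * t| = -((0:ℝ) - 2 * t) from abs_of_nonpos (by linarith),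
        abs_zero, max_eq_left (by linarith : t * (-1) - 0 ≤ t * 1 - 0)]
      ring
    · rw [show |(0:ℝ) - 2 * t| = (0:ℝ) - 2 * t from abs_of_nonneg (by linarith),
        abs_zero, max_eq_right (by linarith : t * 1 - 0 ≤ t * (-1) - 0)]
      ring
  · have hg : 0 < g p u := hgt.2 h
    rw [if_pos (by simp only [one_mul]; linarith),
      if_neg (by simp only [neg_one_mul]; push_neg; linarith)]
    rw [show |g p u| = g p u from abs_of_pos hg]
    rcases le_or_gt (g p u) (2 * t) with hc | hc
    · rw [show |g p u - 2 * t| = -(g p u - 2 * t) from abs_of_nonpos (by linarith),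
        max_eq_left (by linarith : t * (-1) - 0 ≤ t * 1 - g p u)]
      ring
    · rw [show |g p u - 2 * t| = g p u - 2 * t from abs_of_pos (by linarith),
        max_eq_right (by linarith : t * 1 - g p u ≤ t * (-1) - 0)]
      ring

end BernoulliAux

namespace BernoulliAux

variable {p : ℝ}

lemma intOn_log1 : IntegrableOn (fun u : ℝ => Real.log (1 + u)) (Set.Icc (-1:ℝ) 1) := by
  rw [integrableOn_Icc_iff_integrableOn_Ioc]
  have h1 : IntegrableOn (fun u : ℝ => Real.log (1 + u)) (Set.Ioc (-1:ℝ) 0) := by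
    have hc : ContinuousOn (fun u : ℝ => (1 + u) - (1 + u) * Real.log (1 + u))
        (Set.Icc (-1:ℝ) 0) :=
      ((continuous_const.add continuous_id).sub
        (Real.continuous_mul_log.comp (continuous_const.add continuous_id))).continuousOn
    have hd : ∀ x ∈ Set.Ioo (-1:ℝ) 0,
        HasDerivAt (fun u : ℝ => (1 + u) - (1 + u) * Real.log (1 + u))
          (-Real.log (1 + x)) x := by
      intro x hx
      have h1x : (0:ℝ) < 1 + x := by linarith [hx.1]
      have hA : HasDerivAt (fun u : ℝ => (1:ℝ) + u) 1 x := (hasDerivAt_id x).const_add 1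
      have hB : HasDerivAt (fun u : ℝ => (1 + u) * Real.log (1 + u))
          (Real.log (1 + x) + 1) x := by
        exact ((Real.hasDerivAt_mul_log h1x.ne').comp x hA).congr_deriv (by simp)
      exact (hA.sub hB).congr_deriv (by ring)
    have hpos : ∀ x ∈ Set.Ioo (-1:ℝ) 0, 0 ≤ -Real.log (1 + x) := by
      intro x hx
      have := Real.log_nonpos (x := 1 + x) (by linarith [hx.1]) (by linarith [hx.2])
      linarith
    have := intervalIntegral.integrableOn_deriv_of_nonneg hc hd hpos
    exact this.neg.congr (Filter.Eventually.of_forall fun x => by simp)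
  have h2 : IntegrableOn (fun u : ℝ => Real.log (1 + u)) (Set.Ioc (0:ℝ) 1) := by
    have hc : ContinuousOn (fun u : ℝ => Real.log (1 + u)) (Set.Icc (0:ℝ) 1) := by
      apply ContinuousOn.log
      · exact (continuous_const.add continuous_id).continuousOn
      · intro x hx
        have : (0:ℝ) < 1 + x := by linarith [hx.1]
        exact this.ne'
    exact (hc.integrableOn_compact isCompact_Icc).mono_set Set.Ioc_subset_Icc_self
  rw [← Set.Ioc_union_Ioc_eq_Ioc (by norm_num : (-1:ℝ) ≤ 0) (by norm_num : (0:ℝ) ≤ 1)]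
  exact h1.union h2

lemma intOn_log2 : IntegrableOn (fun u : ℝ => Real.log (1 - u)) (Set.Icc (-1:ℝ) 1) := by
  have h1 : IntegrableOn (fun u : ℝ => Real.log (1 - u)) (Set.Icc (-1:ℝ) 0) := by
    have hc : ContinuousOn (fun u : ℝ => Real.log (1 - u)) (Set.Icc (-1:ℝ) 0) := by
      apply ContinuousOn.log
      · exact (continuous_const.sub continuous_id).continuousOn
      · intro x hx
        have : (0:ℝ) < 1 - x := by linarith [hx.2]
        exact this.ne'
    exact hc.integrableOn_compact isCompact_Icc
  have h2 : IntegrableOn (fun u : ℝ => Real.log (1 - u)) (Set.Ioc (0:ℝ) 1) := by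
    have hc : ContinuousOn (fun u : ℝ => u + (1 - u) * Real.log (1 - u))
        (Set.Icc (0:ℝ) 1) :=
      (continuous_id.add
        (Real.continuous_mul_log.comp (continuous_const.sub continuous_id))).continuousOn
    have hd : ∀ x ∈ Set.Ioo (0:ℝ) 1,
        HasDerivAt (fun u : ℝ => u + (1 - u) * Real.log (1 - u))
          (-Real.log (1 - x)) x := by
      intro x hx
      have h2x : (0:ℝ) < 1 - x := by linarith [hx.2]
      have hA : HasDerivAt (fun u : ℝ => (1:ℝ) - u) (-1) x := (hasDerivAt_id x).const_sub 1
      have hB : HasDerivAt (fun u : ℝ => (1 - u) * Real.log (1 - u))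
          (-(Real.log (1 - x) + 1)) x := by
        have := (Real.hasDerivAt_mul_log h2x.ne').comp x hA
        exact this.congr_deriv (by ring)
      have := (hasDerivAt_id x).add hB
      exact this.congr_deriv (by ring)
    have hpos : ∀ x ∈ Set.Ioo (0:ℝ) 1, 0 ≤ -Real.log (1 - x) := by
      intro x hx
      have := Real.log_nonpos (x := 1 - x) (by linarith [hx.2]) (by linarith [hx.1])
      linarith
    have := intervalIntegral.integrableOn_deriv_of_nonneg hc hd hpos
    exact this.neg.congr (Filter.Eventually.of_forall fun x => by simp)
  rw [show Set.Icc (-1:ℝ) 1 = Set.Icc (-1:ℝ) 0 ∪ Set.Ioc (0:ℝ) 1 by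
    rw [Set.Icc_union_Ioc_eq_Icc (by norm_num) (by norm_num)]]
  exact h1.union h2

lemma intOn_g (hp : p ∈ Set.Ioo (0:ℝ) 1) : IntegrableOn (g p) (Set.Icc (-1:ℝ) 1) := by
  have hconst : IntegrableOn (fun _ : ℝ => Real.log (1 - p) - Real.log p)
      (Set.Icc (-1:ℝ) 1) := by
    exact integrableOn_const measure_Icc_lt_top.ne (by simp)
  have h := (intOn_log1.sub intOn_log2).add hconst
  refine h.congr ?_
  have h1 : ∀ᵐ u ∂(volume.restrict (Set.Icc (-1:ℝ) 1)), u ≠ (-1:ℝ) :=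
    ae_restrict_of_ae (ae_ne _)
  have h2 : ∀ᵐ u ∂(volume.restrict (Set.Icc (-1:ℝ) 1)), u ≠ (1:ℝ) :=
    ae_restrict_of_ae (ae_ne _)
  have h3 : ∀ᵐ u ∂(volume.restrict (Set.Icc (-1:ℝ) 1)), u ∈ Set.Icc (-1:ℝ) 1 :=
    ae_restrict_mem measurableSet_Icc
  filter_upwards [h1, h2, h3] with u hu1 hu2 hu3
  have hu : u ∈ Set.Ioo (-1:ℝ) 1 :=
    ⟨lt_of_le_of_ne hu3.1 (Ne.symm hu1), lt_of_le_of_ne hu3.2 hu2⟩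
  simp only [Pi.add_apply, Pi.sub_apply]
  exact (g_eq hp hu).symm

lemma II_g (hp : p ∈ Set.Ioo (0:ℝ) 1) {a b : ℝ} (ha : a ∈ Set.Icc (-1:ℝ) 1)
    (hb : b ∈ Set.Icc (-1:ℝ) 1) : IntervalIntegrable (g p) volume a b :=
  ((intOn_g hp).mono_set (Set.uIcc_subset_Icc ha hb)).intervalIntegrable

lemma hasDerivAt_G (hp : p ∈ Set.Ioo (0:ℝ) 1) {x : ℝ} (hx : x ∈ Set.Ioo (-1:ℝ) 1) :
    HasDerivAt (G p) (g p x) x := by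
  have h1x : (0:ℝ) < 1 + x := by linarith [hx.1]
  have h2x : (0:ℝ) < 1 - x := by linarith [hx.2]
  have hA : HasDerivAt (fun u : ℝ => (1 + u) * Real.log (1 + u))
      (Real.log (1 + x) + 1) x := by
    exact ((Real.hasDerivAt_mul_log h1x.ne').comp x ((hasDerivAt_id x).const_add 1)).congr_deriv (by simp)
  have hB : HasDerivAt (fun u : ℝ => (1 - u) * Real.log (1 - u))
      (-(Real.log (1 - x) + 1)) x := by
    have := (Real.hasDerivAt_mul_log h2x.ne').comp x ((hasDerivAt_id x).const_sub 1)
    exact this.congr_deriv (by ring)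
  have hC : HasDerivAt (fun u : ℝ => u * (Real.log (1 - p) - Real.log p))
      (Real.log (1 - p) - Real.log p) x := by
    simpa using (hasDerivAt_id x).mul_const (Real.log (1 - p) - Real.log p)
  have key := (hA.add hB).add hC
  show HasDerivAt (fun u : ℝ => (1 + u) * Real.log (1 + u) + (1 - u) * Real.log (1 - u) +
    u * (Real.log (1 - p) - Real.log p)) (g p x) x
  exact key.congr_deriv (by rw [g_eq hp hx]; ring)

lemma integral_g (hp : p ∈ Set.Ioo (0:ℝ) 1) {a b : ℝ} (ha : a ∈ Set.Icc (-1:ℝ) 1)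
    (hb : b ∈ Set.Icc (-1:ℝ) 1) (hab : a ≤ b) :
    ∫ u in a..b, g p u = G p b - G p a := by
  have hcont : Continuous (G p) := by
    show Continuous fun u : ℝ => (1 + u) * Real.log (1 + u) + (1 - u) * Real.log (1 - u) +
      u * (Real.log (1 - p) - Real.log p)
    exact ((Real.continuous_mul_log.comp (continuous_const.add continuous_id)).add
      (Real.continuous_mul_log.comp (continuous_const.sub continuous_id))).add
      (continuous_id.mul continuous_const)
  apply intervalIntegral.integral_eq_sub_of_hasDeriv_right_of_le hab hcont.continuousOn
  · intro x hx
    have hx' : x ∈ Set.Ioo (-1:ℝ) 1 :=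
      ⟨lt_of_le_of_lt ha.1 hx.1, lt_of_lt_of_le hx.2 hb.2⟩
    exact (hasDerivAt_G hp hx').hasDerivWithinAt
  · exact II_g hp ha hb

lemma G_one : G p 1 = 2 * Real.log 2 + (Real.log (1 - p) - Real.log p) := by
  rw [G]
  norm_num

lemma G_neg_one : G p (-1) = 2 * Real.log 2 - (Real.log (1 - p) - Real.log p) := by
  rw [G]
  norm_num
  ring

lemma keyM (hp : p ∈ Set.Ioo (0:ℝ) 1) (s : ℝ) :
    ∫ u in (-1:ℝ)..1, |g p u - 2 * s| =
      4 * Real.log (p * Real.exp (2 * s) + (1 - p)) - 2 * Real.log p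
        - 2 * Real.log (1 - p) - 4 * s := by
  obtain ⟨hp0, hp1⟩ := hp
  have hp' : p ∈ Set.Ioo (0:ℝ) 1 := ⟨hp0, hp1⟩
  have hE0 : (0:ℝ) < Real.exp (2 * s) := Real.exp_pos _
  have hD : (0:ℝ) < p * Real.exp (2 * s) + (1 - p) := by nlinarith
  set c := uS p s with hc
  have h1c : 1 + c = 2 * (p * Real.exp (2 * s)) / (p * Real.exp (2 * s) + (1 - p)) := by
    rw [hc, uS]
    field_simp
    ring
  have h2c : 1 - c = 2 * (1 - p) / (p * Real.exp (2 * s) + (1 - p)) := by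
    rw [hc, uS]
    field_simp
    ring
  have hc1 : (0:ℝ) < 1 + c := by
    rw [h1c]
    exact div_pos (by nlinarith) hD
  have hc2 : (0:ℝ) < 1 - c := by
    rw [h2c]
    exact div_pos (by nlinarith) hD
  have hcIoo : c ∈ Set.Ioo (-1:ℝ) 1 := ⟨by linarith, by linarith⟩
  have hcm : c ∈ Set.Icc (-1:ℝ) 1 := ⟨by linarith, by linarith⟩
  have hm1 : (-1:ℝ) ∈ Set.Icc (-1:ℝ) 1 := by norm_num
  have hq1 : (1:ℝ) ∈ Set.Icc (-1:ℝ) 1 := by norm_num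
  have hIl : IntervalIntegrable (fun u => |g p u - 2 * s|) volume (-1) c :=
    ((II_g hp' hm1 hcm).sub intervalIntegrable_const).abs
  have hIr : IntervalIntegrable (fun u => |g p u - 2 * s|) volume c 1 :=
    ((II_g hp' hcm hq1).sub intervalIntegrable_const).abs
  rw [← intervalIntegral.integral_add_adjacent_intervals hIl hIr]
  have hL : ∫ u in (-1:ℝ)..c, |g p u - 2 * s| = ∫ u in (-1:ℝ)..c, (2 * s - g p u) := by
    rw [intervalIntegral.integral_of_le hcm.1, intervalIntegral.integral_of_le hcm.1]
    apply setIntegral_congr_fun measurableSet_Ioc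
    intro u hu
    have hu' : u ∈ Set.Ioo (-1:ℝ) 1 := ⟨hu.1, lt_of_le_of_lt hu.2 hcIoo.2⟩
    have hle : g p u ≤ 2 * s := (g_le_iff hp' hu' s).2 hu.2
    show |g p u - 2 * s| = 2 * s - g p u
    rw [abs_of_nonpos (by linarith)]
    ring
  have hR : ∫ u in c..(1:ℝ), |g p u - 2 * s| = ∫ u in c..(1:ℝ), (g p u - 2 * s) := by
    rw [intervalIntegral.integral_of_le hcm.2, intervalIntegral.integral_of_le hcm.2]
    apply setIntegral_congr_ae measurableSet_Ioc
    filter_upwards [ae_ne (1:ℝ)] with u hu1 hu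
    have hu' : u ∈ Set.Ioo (-1:ℝ) 1 :=
      ⟨lt_trans hcIoo.1 hu.1, lt_of_le_of_ne hu.2 hu1⟩
    have hge : 2 * s ≤ g p u := (g_ge_iff hp' hu' s).2 hu.1.le
    show |g p u - 2 * s| = g p u - 2 * s
    rw [abs_of_nonneg (by linarith)]
  rw [hL, hR,
    intervalIntegral.integral_sub intervalIntegrable_const (II_g hp' hm1 hcm),
    intervalIntegral.integral_sub (II_g hp' hcm hq1) intervalIntegrable_const,
    integral_g hp' hm1 hcm hcm.1, integral_g hp' hcm hq1 hcm.2,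
    intervalIntegral.integral_const, intervalIntegral.integral_const]
  have hlog1 : Real.log (1 + c) =
      Real.log 2 + Real.log p + 2 * s - Real.log (p * Real.exp (2 * s) + (1 - p)) := by
    rw [h1c, Real.log_div (by nlinarith : (0:ℝ) < 2 * (p * Real.exp (2 * s))).ne' hD.ne',
      Real.log_mul (by norm_num : (2:ℝ) ≠ 0) (by nlinarith : (0:ℝ) < p * Real.exp (2 * s)).ne',
      Real.log_mul hp0.ne' hE0.ne', Real.log_exp]
    ring
  have hlog2 : Real.log (1 - c) =
      Real.log 2 + Real.log (1 - p) - Real.log (p * Real.exp (2 * s) + (1 - p)) := by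
    rw [h2c, Real.log_div (by nlinarith : (0:ℝ) < 2 * (1 - p)).ne' hD.ne',
      Real.log_mul (by norm_num : (2:ℝ) ≠ 0) (by linarith : (0:ℝ) < 1 - p).ne']
  have hGc : G p c = (1 + c) * Real.log (1 + c) + (1 - c) * Real.log (1 - c) +
      c * (Real.log (1 - p) - Real.log p) := rfl
  rw [hGc, hlog1, hlog2, G_one, G_neg_one]
  simp only [smul_eq_mul]
  ring

end BernoulliAux

open BernoulliAux in
/-- **Dual identity for the Bernoulli cost.** For `U` uniform on `[-1,1]` and any `t ∈ ℝ`,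
`E[max_{x ∈ {-1,1}} (t x - w_p(x, U))] = log (p eᵗ + (1-p) e^{-t}) = Λ_{μ_p}(t)`. -/
theorem bernoulli_infConv_eq (p t : ℝ) (hp : p ∈ Set.Ioo (0 : ℝ) 1) :
    ∫ u, max (t * 1 - wReal p 1 u) (t * (-1) - wReal p (-1) u) ∂uniformIcc =
      Real.log (p * Real.exp t + (1 - p) * Real.exp (-t)) := by
  have hp0 := hp.1
  have hp1 := hp.2
  have hcongr : ∫ u in Set.Icc (-1:ℝ) 1,
      max (t * 1 - wReal p 1 u) (t * (-1) - wReal p (-1) u) =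
      ∫ u in Set.Icc (-1:ℝ) 1, (|g p u - 2 * t| - |g p u - 2 * 0|) / 2 := by
    apply setIntegral_congr_ae measurableSet_Icc
    filter_upwards [ae_ne (-1:ℝ), ae_ne (1:ℝ)] with u hu1 hu2 hu3
    have hu : u ∈ Set.Ioo (-1:ℝ) 1 :=
      ⟨lt_of_le_of_ne hu3.1 (Ne.symm hu1), lt_of_le_of_ne hu3.2 hu2⟩
    rw [max_eq hp hu t]
    norm_num
  rw [show uniformIcc = (2 : ℝ≥0∞)⁻¹ • volume.restrict (Set.Icc (-1 : ℝ) 1) from rfl,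
    integral_smul_measure, hcongr, integral_Icc_eq_integral_Ioc,
    ← intervalIntegral.integral_of_le (by norm_num : (-1:ℝ) ≤ 1)]
  have hm1 : (-1:ℝ) ∈ Set.Icc (-1:ℝ) 1 := by norm_num
  have hq1 : (1:ℝ) ∈ Set.Icc (-1:ℝ) 1 := by norm_num
  have hIt : IntervalIntegrable (fun u => |g p u - 2 * t|) volume (-1) 1 :=
    ((II_g hp hm1 hq1).sub intervalIntegrable_const).abs
  have hI0 : IntervalIntegrable (fun u => |g p u - 2 * 0|) volume (-1) 1 :=
    ((II_g hp hm1 hq1).sub intervalIntegrable_const).abs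
  rw [intervalIntegral.integral_div, intervalIntegral.integral_sub hIt hI0,
    keyM hp t, keyM hp 0]
  have h10 : p * Real.exp (2 * 0) + (1 - p) = 1 := by
    norm_num
  rw [h10, Real.log_one]
  have hDpos : (0:ℝ) < p * Real.exp t + (1 - p) * Real.exp (-t) := by
    nlinarith [Real.exp_pos t, Real.exp_pos (-t)]
  have hx : p * Real.exp (2 * t) + (1 - p) =
      (p * Real.exp t + (1 - p) * Real.exp (-t)) * Real.exp t := by
    have e1 : Real.exp t * Real.exp t = Real.exp (2 * t) := by
      rw [← Real.exp_add]; ring_nf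
    have e2 : Real.exp (-t) * Real.exp t = 1 := by
      rw [← Real.exp_add]; simp
    linear_combination (-p) * e1 - (1 - p) * e2
  rw [hx, Real.log_mul hDpos.ne' (Real.exp_pos t).ne', Real.log_exp]
  have h2 : ((2:ℝ≥0∞)⁻¹).toReal = (2:ℝ)⁻¹ := by
    simp
  rw [h2, smul_eq_mul]
  ring
end

section
/- Let μ be a probability measure on ℝ^n with mean 0 and let α : ℝ^n → [0,+∞] be a proper, lower semi-continuous, convex function. Suppose μ satisfies the transportation-entropy inequality W_c(ν,μ) ≤ H(ν|μ) for all probability measures ν on ℝ^n, with cost c(x,y) = α(x-y). Then α(x) ≤ Λ*_μ(x) for all x ∈ ℝ^n, where Λ*_μ(x) = sup_{ξ∈ℝ^n} ( ⟨ξ,x⟩ - Λ_μ(ξ) ) is the Legendre transform of the log-Laplace transform Λ_μ(ξ) = log ∫ e^{⟨ξ,y⟩} dμ(y). -/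
open MeasureTheory Real Set ENNReal
open scoped Classical

/-- The transportation cost `W_c(ν, μ)`: infimum of `∫ c dπ` over all couplings `π`
of `ν` and `μ`. -/
noncomputable def transportCost {E F : Type*} [MeasurableSpace E] [MeasurableSpace F]
    (c : E → F → ℝ≥0∞) (ν : Measure E) (μ : Measure F) : ℝ≥0∞ :=
  ⨅ (P : Measure (E × F)) (_ : P.map Prod.fst = ν) (_ : P.map Prod.snd = μ),
    ∫⁻ p, c p.1 p.2 ∂P

/-- The relative entropy `H(ν|μ) = ∫ log (dν/dμ) dν` if `ν ≪ μ` (and the integral is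
well defined), and `+∞` otherwise.  (Since the negative part of `log (dν/dμ)` is always
`ν`-integrable for probability measures, non-integrability corresponds to `H = +∞`.) -/

noncomputable def relEntropy {E : Type*} [MeasurableSpace E] (ν μ : Measure E) : ℝ≥0∞ :=
  if ν ≪ μ ∧ Integrable (fun x => Real.log ((ν.rnDeriv μ x).toReal)) ν
  then ENNReal.ofReal (∫ x, Real.log ((ν.rnDeriv μ x).toReal) ∂ν) else ⊤

/-- The logarithmic Laplace transform `Λ_μ(ξ) = log ∫ e^{⟨ξ,x⟩} dμ(x)`, with values in
`EReal` (it may be `+∞`). -/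
noncomputable def logLaplaceE (n : ℕ) (μ : Measure (Fin n → ℝ)) (ξ : Fin n → ℝ) : EReal :=
  ENNReal.log (∫⁻ x, ENNReal.ofReal (Real.exp (∑ i, ξ i * x i)) ∂μ)

/-- The Legendre transform `Λ*_μ(x) = sup_ξ (⟨ξ,x⟩ - Λ_μ(ξ))` of the log-Laplace
transform, with values in `EReal`. -/
noncomputable def legendreE (n : ℕ) (μ : Measure (Fin n → ℝ)) (x : Fin n → ℝ) : EReal :=
  ⨆ ξ : Fin n → ℝ, (((∑ i, ξ i * x i : ℝ) : EReal) - logLaplaceE n μ ξ)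

theorem aux_exists_minorant (n : ℕ) (α : (Fin n → ℝ) → ℝ≥0∞)
    (hlsc : LowerSemicontinuous α) (hproper : ∃ x, α x ≠ ⊤)
    (hconv : ∀ x y : Fin n → ℝ, ∀ t : ℝ, 0 ≤ t → t ≤ 1 →
      α (t • x + (1 - t) • y) ≤ ENNReal.ofReal t * α x + ENNReal.ofReal (1 - t) * α y)
    (x : Fin n → ℝ) (c : ℝ) (hc0 : 0 ≤ c) (hc : ENNReal.ofReal c < α x) :
    ∃ (ξ : Fin n → ℝ) (r : ℝ),
      (∀ z, ENNReal.ofReal ((∑ i, ξ i * z i) - r) ≤ α z) ∧ c < (∑ i, ξ i * x i) - r := by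
  set S : Set ((Fin n → ℝ) × ℝ) := {p | 0 ≤ p.2 ∧ α p.1 ≤ ENNReal.ofReal p.2} with hS
  have hSconv : Convex ℝ S := by
    rintro p ⟨hp0, hp⟩ q ⟨hq0, hq⟩ a b ha hb hab
    have hb' : b = 1 - a := by linarith
    constructor
    · simpa using add_nonneg (mul_nonneg ha hp0) (mul_nonneg hb hq0)
    · have h1 := hconv p.1 q.1 a ha (by linarith)
      calc α (a • p + b • q).1 = α (a • p.1 + (1 - a) • q.1) := by rw [← hb']; rfl
        _ ≤ ENNReal.ofReal a * α p.1 + ENNReal.ofReal (1 - a) * α q.1 := h1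
        _ = ENNReal.ofReal a * α p.1 + ENNReal.ofReal b * α q.1 := by rw [← hb']
        _ ≤ ENNReal.ofReal a * ENNReal.ofReal p.2 + ENNReal.ofReal b * ENNReal.ofReal q.2 := by
            gcongr
        _ = ENNReal.ofReal (a * p.2 + b * q.2) := by
            rw [← ENNReal.ofReal_mul ha, ← ENNReal.ofReal_mul hb,
              ENNReal.ofReal_add (mul_nonneg ha hp0) (mul_nonneg hb hq0)]
        _ = ENNReal.ofReal (a • p + b • q).2 := rfl
  have hSclosed : IsClosed S := by
    have h1 : IsClosed {p : (Fin n → ℝ) × ℝ | 0 ≤ p.2} :=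
      isClosed_le continuous_const continuous_snd
    have h2 : IsClosed {p : (Fin n → ℝ) × ℝ | α p.1 ≤ ENNReal.ofReal p.2} := by
      rw [← isOpen_compl_iff, isOpen_iff_mem_nhds]
      rintro ⟨z, t⟩ hzt
      simp only [mem_compl_iff, mem_setOf_eq, not_le] at hzt
      obtain ⟨y, hy1, hy2⟩ := exists_between hzt
      have hA : ∀ᶠ w in nhds z, y < α w := hlsc z y hy2
      have hB : {s : ℝ | ENNReal.ofReal s < y} ∈ nhds t :=
        (isOpen_lt ENNReal.continuous_ofReal continuous_const).mem_nhds hy1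
      rw [nhds_prod_eq]
      refine Filter.mem_of_superset (Filter.prod_mem_prod hA hB) ?_
      rintro ⟨w, s⟩ ⟨hw, hs⟩
      simp only [mem_compl_iff, mem_setOf_eq, not_le]
      exact lt_trans hs hw
    rw [hS, setOf_and]
    exact h1.inter h2
  have hxS : (x, c) ∉ S := fun h => absurd h.2 (not_le.2 hc)
  obtain ⟨f, u, hfs, hfx⟩ := geometric_hahn_banach_closed_point hSconv hSclosed hxS
  set ξ0 : Fin n → ℝ := fun i => f ((Pi.single i 1 : Fin n → ℝ), (0 : ℝ)) with hξ0
  set s : ℝ := f ((0 : Fin n → ℝ), (1 : ℝ)) with hs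
  have hf_apply : ∀ (z : Fin n → ℝ) (t : ℝ), f (z, t) = (∑ i, ξ0 i * z i) + t * s := by
    intro z t
    have hzt : (z, t) = (∑ i, z i • ((Pi.single i 1 : Fin n → ℝ), (0 : ℝ)))
        + t • ((0 : Fin n → ℝ), (1 : ℝ)) := by
      refine Prod.ext ?_ ?_
      · have hsingle : ∀ i, z i • (Pi.single i 1 : Fin n → ℝ) = Pi.single i (z i) := by
          intro i
          funext j
          simp [Pi.single_apply, mul_ite]
        simp only [Prod.fst_add, Prod.fst_sum, Prod.smul_fst, smul_zero, add_zero]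
        simp_rw [hsingle]
        try rw [Finset.univ_sum_single z]
      · simp [Prod.snd_sum]
    have hsm : ∀ (a : ℝ) (p : (Fin n → ℝ) × ℝ), f (a • p) = a * f p := fun a p => by
      rw [f.map_smul, smul_eq_mul]
    rw [hzt, map_add, map_sum]
    simp_rw [hsm]
    congr 1
    exact Finset.sum_congr rfl fun i _ => mul_comm _ _
  obtain ⟨z₀, hz₀⟩ := hproper
  have hz₀S : ∀ t : ℝ, (α z₀).toReal ≤ t → (z₀, t) ∈ S := by
    intro t ht
    refine ⟨le_trans ENNReal.toReal_nonneg ht, ?_⟩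
    calc α z₀ = ENNReal.ofReal ((α z₀).toReal) := (ENNReal.ofReal_toReal hz₀).symm
      _ ≤ ENNReal.ofReal t := ENNReal.ofReal_le_ofReal ht
  have hs_nonpos : s ≤ 0 := by
    by_contra hpos
    push_neg at hpos
    set A : ℝ := ∑ i, ξ0 i * z₀ i with hA
    set t : ℝ := max ((α z₀).toReal) ((u - A) / s + 1) with ht
    have h1 : f (z₀, t) < u := hfs _ (hz₀S t (le_max_left _ _))
    rw [hf_apply] at h1
    have h2 : (u - A) / s + 1 ≤ t := le_max_right _ _
    have h3 : ((u - A) / s + 1) * s ≤ t * s := mul_le_mul_of_nonneg_right h2 hpos.le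
    rw [add_mul, div_mul_cancel₀ _ hpos.ne', one_mul] at h3
    linarith
  rcases lt_or_eq_of_le hs_nonpos with hneg | hzero
  · -- s < 0 case
    have hspos : 0 < -s := by linarith
    refine ⟨fun i => ξ0 i / (-s), u / (-s), ?_, ?_⟩
    · intro z
      by_cases hz : α z = ⊤
      · rw [hz]; exact le_top
      · have hmem : (z, (α z).toReal) ∈ S :=
          ⟨ENNReal.toReal_nonneg, le_of_eq (ENNReal.ofReal_toReal hz).symm⟩
        have h1 : f (z, (α z).toReal) < u := hfs _ hmem
        rw [hf_apply] at h1
        have h3 : (∑ i, (ξ0 i / (-s)) * z i) = (∑ i, ξ0 i * z i) / (-s) := by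
          rw [Finset.sum_div]
          exact Finset.sum_congr rfl fun i _ => by ring
        have h2 : (∑ i, (ξ0 i / (-s)) * z i) - u / (-s) ≤ (α z).toReal := by
          rw [h3, div_sub_div_same, div_le_iff₀ hspos]
          nlinarith
        calc ENNReal.ofReal ((∑ i, (ξ0 i / (-s)) * z i) - u / (-s))
            ≤ ENNReal.ofReal ((α z).toReal) := ENNReal.ofReal_le_ofReal h2
          _ = α z := ENNReal.ofReal_toReal hz
    · have h1 : u < (∑ i, ξ0 i * x i) + c * s := by rw [← hf_apply]; exact hfx
      have h3 : (∑ i, (ξ0 i / (-s)) * x i) = (∑ i, ξ0 i * x i) / (-s) := by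
        rw [Finset.sum_div]; exact Finset.sum_congr rfl fun i _ => by ring
      rw [h3, div_sub_div_same, lt_div_iff₀ hspos]
      nlinarith
  · -- s = 0 case
    have h1 : u < ∑ i, ξ0 i * x i := by
      have := hfx
      rw [hf_apply, hzero, mul_zero, add_zero] at this
      exact this
    have hD : 0 < (∑ i, ξ0 i * x i) - u := by linarith
    set lam : ℝ := max 1 ((c + 1) / ((∑ i, ξ0 i * x i) - u)) with hlam
    have hlam1 : (1 : ℝ) ≤ lam := le_max_left _ _
    have hlam0 : 0 < lam := by linarith
    refine ⟨fun i => lam * ξ0 i, lam * u, ?_, ?_⟩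
    · intro z
      by_cases hz : α z = ⊤
      · rw [hz]; exact le_top
      · have hmem : (z, (α z).toReal) ∈ S :=
          ⟨ENNReal.toReal_nonneg, le_of_eq (ENNReal.ofReal_toReal hz).symm⟩
        have h2 : f (z, (α z).toReal) < u := hfs _ hmem
        rw [hf_apply, hzero, mul_zero, add_zero] at h2
        have h4 : (∑ i, (lam * ξ0 i) * z i) - lam * u ≤ 0 := by
          have h5 : (∑ i, (lam * ξ0 i) * z i) = lam * ∑ i, ξ0 i * z i := by
            rw [Finset.mul_sum]; exact Finset.sum_congr rfl fun i _ => by ring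
          rw [h5]
          nlinarith
        calc ENNReal.ofReal ((∑ i, (lam * ξ0 i) * z i) - lam * u)
            = 0 := ENNReal.ofReal_eq_zero.2 h4
          _ ≤ α z := zero_le
    · have h5 : (∑ i, (lam * ξ0 i) * x i) = lam * ∑ i, ξ0 i * x i := by
        rw [Finset.mul_sum]; exact Finset.sum_congr rfl fun i _ => by ring
      rw [h5]
      have h6 : (c + 1) / ((∑ i, ξ0 i * x i) - u) ≤ lam := le_max_right _ _
      have h7 : (c + 1) ≤ lam * ((∑ i, ξ0 i * x i) - u) := by
        rw [div_le_iff₀ hD] at h6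
        linarith
      nlinarith

theorem aux_logLaplace_le (n : ℕ) (μ : Measure (Fin n → ℝ)) [IsProbabilityMeasure μ]
    (hmi : ∀ i, Integrable (fun x => x i) μ) (hmean : ∀ i, ∫ x, x i ∂μ = 0)
    (α : (Fin n → ℝ) → ℝ≥0∞)
    (hTE : ∀ ν : Measure (Fin n → ℝ), IsProbabilityMeasure ν →
      transportCost (fun x y => α (x - y)) ν μ ≤ relEntropy ν μ)
    (ξ : Fin n → ℝ) (r : ℝ)
    (hmin : ∀ z, ENNReal.ofReal ((∑ i, ξ i * z i) - r) ≤ α z) :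
    logLaplaceE n μ ξ ≤ (r : EReal) := by
  set L : (Fin n → ℝ) → ℝ := fun x => ∑ i, ξ i * x i with hL
  have hLmeas : Measurable L :=
    Finset.measurable_sum _ fun i _ => measurable_const.mul (measurable_pi_apply i)
  have hLcont : Continuous L :=
    continuous_finset_sum _ fun i _ => continuous_const.mul (continuous_apply i)
  have hLint : Integrable L μ := integrable_finset_sum _ fun i _ => (hmi i).const_mul (ξ i)
  have hLmean : ∫ x, L x ∂μ = 0 := by
    rw [hL, integral_finset_sum _ fun i _ => (hmi i).const_mul (ξ i)]
    simp_rw [integral_const_mul, hmean, mul_zero, Finset.sum_const_zero]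
  set g : (Fin n → ℝ) → ℝ := fun x => L x - r with hg
  have hgmeas : Measurable g := hLmeas.sub measurable_const
  have hgint : Integrable g μ := hLint.sub (integrable_const r)
  have hfm_meas : ∀ m : ℕ, Measurable fun x => min (g x) (m : ℝ) :=
    fun m => hgmeas.min measurable_const
  have hfm_int : ∀ m : ℕ, Integrable (fun x => min (g x) (m : ℝ)) μ := by
    intro m
    have hbound : Integrable (fun x => |g x| + (m : ℝ)) μ := hgint.abs.add (integrable_const _)
    refine hbound.mono'
      (hfm_meas m).aestronglyMeasurable (ae_of_all _ fun x => ?_)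
    have hm0 : (0 : ℝ) ≤ (m : ℝ) := Nat.cast_nonneg m
    rw [Real.norm_eq_abs, abs_le]
    constructor
    · apply le_min
      · nlinarith [abs_nonneg (g x), neg_abs_le (g x)]
      · nlinarith [abs_nonneg (g x)]
    · exact le_trans (min_le_right _ _) (by nlinarith [abs_nonneg (g x)])
  have hexp_int : ∀ m : ℕ, Integrable (fun x => exp (min (g x) (m : ℝ))) μ := by
    intro m
    refine (integrable_const (exp (m : ℝ))).mono'
      ((hfm_meas m).exp).aestronglyMeasurable (ae_of_all _ fun x => ?_)
    rw [Real.norm_eq_abs, abs_of_pos (exp_pos _)]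
    exact exp_le_exp.2 (min_le_right _ _)
  -- main step: for each m : ℕ, ∫ exp (min (g x) m) dμ ≤ 1
  have key : ∀ m : ℕ, ∫ x, Real.exp (min (g x) m) ∂μ ≤ 1 := by
    intro m
    set fm : (Fin n → ℝ) → ℝ := fun x => min (g x) m with hfm
    set Z : ℝ := ∫ x, exp (fm x) ∂μ with hZ
    have hZpos : 0 < Z := integral_exp_pos (hexp_int m)
    set ν : Measure (Fin n → ℝ) := μ.tilted fm with hν
    haveI hνprob : IsProbabilityMeasure ν := isProbabilityMeasure_tilted (hexp_int m)
    have hac : ν ≪ μ := tilted_absolutelyContinuous μ fm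
    -- ν is dominated by a multiple of μ
    have hνle : ν ≤ (ENNReal.ofReal (exp (m : ℝ) / Z)) • μ := by
      have h1 : ν = μ.withDensity fun x => ENNReal.ofReal (exp (fm x) / Z) := rfl
      rw [h1, ← withDensity_const]
      refine withDensity_mono (ae_of_all _ fun x => ?_)
      exact ENNReal.ofReal_le_ofReal
        ((div_le_div_iff_of_pos_right hZpos).2 (exp_le_exp.2 (min_le_right _ _)))
    have hIntν : ∀ (φ : (Fin n → ℝ) → ℝ), Integrable φ μ → Integrable φ ν := fun φ hφ =>
      Integrable.mono_measure (hφ.smul_measure ENNReal.ofReal_ne_top) hνle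
    have hgν : Integrable g ν := hIntν g hgint
    have hLν : Integrable L ν := hIntν L hLint
    have hfmν : Integrable fm ν := hIntν fm (hfm_int m)
    -- relative entropy of ν with respect to μ
    have hlog : (fun x => Real.log ((ν.rnDeriv μ x).toReal)) =ᵐ[ν] fun x => fm x - Real.log Z :=
      hac.ae_eq (log_rnDeriv_tilted_left_self (hexp_int m))
    have hint_llr : Integrable (fun x => Real.log ((ν.rnDeriv μ x).toReal)) ν :=
      (hfmν.sub (integrable_const (Real.log Z))).congr hlog.symm
    have hent : relEntropy ν μ = ENNReal.ofReal ((∫ x, fm x ∂ν) - Real.log Z) := by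
      rw [relEntropy, if_pos ⟨hac, hint_llr⟩]
      congr 1
      rw [integral_congr_ae hlog, integral_sub hfmν (integrable_const _), integral_const]
      simp [measure_univ]
    -- nonnegativity of the entropy
    set ρ : (Fin n → ℝ) → ℝ := fun x => exp (fm x) / Z with hρ
    have hρpos : ∀ x, 0 < ρ x := fun x => div_pos (exp_pos _) hZpos
    have hρint : Integrable ρ μ := (hexp_int m).div_const Z
    have hρmean : ∫ x, ρ x ∂μ = 1 := by
      rw [hρ]
      rw [integral_div]
      exact div_self hZpos.ne'
    have hρlog : ∀ x, Real.log (ρ x) = fm x - Real.log Z := fun x => by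
      rw [hρ]
      simp only
      rw [Real.log_div (exp_pos _).ne' hZpos.ne', Real.log_exp]
    have hρbound : ∀ x, ρ x ≤ exp (m : ℝ) / Z := fun x =>
      (div_le_div_iff_of_pos_right hZpos).2 (exp_le_exp.2 (min_le_right _ _))
    have hρlog_int : Integrable (fun x => ρ x * Real.log (ρ x)) μ := by
      have heq : (fun x => ρ x * Real.log (ρ x)) = fun x => ρ x * (fm x - Real.log Z) :=
        funext fun x => by rw [hρlog x]
      rw [heq]
      have hbound : Integrable (fun x => (exp (m : ℝ) / Z) * (|fm x| + |Real.log Z|)) μ :=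
        ((hfm_int m).abs.add (integrable_const _)).const_mul _
      refine hbound.mono'
        (((hfm_meas m).exp.div_const Z).mul ((hfm_meas m).sub measurable_const)
          ).aestronglyMeasurable (ae_of_all _ fun x => ?_)
      rw [Real.norm_eq_abs, abs_mul, abs_of_pos (hρpos x)]
      have h1 : |fm x - Real.log Z| ≤ |fm x| + |Real.log Z| := abs_sub _ _
      have h2 : (0 : ℝ) ≤ |fm x| + |Real.log Z| := by positivity
      exact mul_le_mul (hρbound x) h1 (abs_nonneg _) (by positivity)
    have hJensen : 0 ≤ ∫ x, ρ x * Real.log (ρ x) ∂μ := by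
      have hptw : ∀ x, ρ x - 1 ≤ ρ x * Real.log (ρ x) := by
        intro x
        have h1 : Real.log (ρ x)⁻¹ ≤ (ρ x)⁻¹ - 1 :=
          Real.log_le_sub_one_of_pos (inv_pos.2 (hρpos x))
        rw [Real.log_inv] at h1
        have h3 := mul_le_mul_of_nonneg_left h1 (hρpos x).le
        have h2 : ρ x * (ρ x)⁻¹ = 1 := mul_inv_cancel₀ (hρpos x).ne'
        nlinarith
      have h4 : ∫ x, (ρ x - 1) ∂μ ≤ ∫ x, ρ x * Real.log (ρ x) ∂μ :=
        integral_mono (hρint.sub (integrable_const 1)) hρlog_int hptw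
      rw [integral_sub hρint (integrable_const 1), hρmean, integral_const] at h4
      simpa [measure_univ] using h4
    have hint_eq : ∫ x, (fm x - Real.log Z) ∂ν = ∫ x, ρ x * Real.log (ρ x) ∂μ := by
      rw [hν, integral_tilted]
      refine integral_congr_ae (ae_of_all _ fun x => ?_)
      show (rexp (fm x) / ∫ y, rexp (fm y) ∂μ) • (fm x - Real.log Z) = ρ x * Real.log (ρ x)
      rw [hρlog x, smul_eq_mul, hρ, hZ]
    have hHsub : ∫ x, (fm x - Real.log Z) ∂ν = (∫ x, fm x ∂ν) - Real.log Z := by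
      rw [integral_sub hfmν (integrable_const _), integral_const]
      simp [measure_univ]
    have hHpos : 0 ≤ (∫ x, fm x ∂ν) - Real.log Z := by
      rw [← hHsub, hint_eq]; exact hJensen
    -- transport cost lower bound
    have hW : ENNReal.ofReal ((∫ x, L x ∂ν) - r) ≤ transportCost (fun x y => α (x - y)) ν μ := by
      rw [transportCost]
      refine le_iInf fun P => le_iInf fun hP1 => le_iInf fun hP2 => ?_
      set φ : ((Fin n → ℝ) × (Fin n → ℝ)) → ℝ := fun p => L p.1 - L p.2 - r with hφ
      haveI hPprob : IsProbabilityMeasure P := by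
        constructor
        have h := congrArg (fun m : Measure (Fin n → ℝ) => m univ) hP1
        simp only [Measure.map_apply measurable_fst MeasurableSet.univ, preimage_univ] at h
        rw [h]
        exact measure_univ
      have hφ1 : Integrable (fun p : (Fin n → ℝ) × (Fin n → ℝ) => L p.1) P := by
        have h : Integrable L (P.map Prod.fst) := by rw [hP1]; exact hLν
        exact h.comp_measurable measurable_fst
      have hφ2 : Integrable (fun p : (Fin n → ℝ) × (Fin n → ℝ) => L p.2) P := by
        have h : Integrable L (P.map Prod.snd) := by rw [hP2]; exact hLint
        exact h.comp_measurable measurable_snd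
      have hsub12 : Integrable (fun p : (Fin n → ℝ) × (Fin n → ℝ) => L p.1 - L p.2) P :=
        hφ1.sub hφ2
      have hφint : Integrable φ P := hsub12.sub (integrable_const r)
      have e1 : ∫ p, L p.1 ∂P = ∫ x, L x ∂ν := by
        rw [← hP1, integral_map measurable_fst.aemeasurable hLcont.aestronglyMeasurable]
      have e2 : ∫ p, L p.2 ∂P = 0 := by
        rw [← hLmean, ← hP2, integral_map measurable_snd.aemeasurable hLcont.aestronglyMeasurable]
      have hφval : ∫ p, φ p ∂P = (∫ x, L x ∂ν) - r := by
        rw [hφ]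
        rw [integral_sub hsub12 (integrable_const r), integral_sub hφ1 hφ2, e1, e2,
          integral_const]
        simp [measure_univ]
      have hmax : ∀ a : ℝ, ENNReal.ofReal (max a 0) = ENNReal.ofReal a := by
        intro a
        rcases le_total a 0 with h | h
        · rw [max_eq_right h, ENNReal.ofReal_zero, eq_comm, ENNReal.ofReal_eq_zero]
          exact h
        · rw [max_eq_left h]
      calc ENNReal.ofReal ((∫ x, L x ∂ν) - r) = ENNReal.ofReal (∫ p, φ p ∂P) := by rw [hφval]
        _ ≤ ENNReal.ofReal (∫ p, max (φ p) 0 ∂P) :=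
            ENNReal.ofReal_le_ofReal
              (integral_mono hφint hφint.pos_part (fun p => le_max_left _ _))
        _ = ∫⁻ p, ENNReal.ofReal (max (φ p) 0) ∂P :=
            ofReal_integral_eq_lintegral_ofReal hφint.pos_part
              (ae_of_all _ fun p => le_max_right _ _)
        _ = ∫⁻ p, ENNReal.ofReal (φ p) ∂P := by
            refine lintegral_congr fun p => hmax _
        _ ≤ ∫⁻ p, α (p.1 - p.2) ∂P := by
            refine lintegral_mono fun p => ?_
            have heq : (∑ i, ξ i * (p.1 - p.2) i) - r = φ p := by
              simp only [hφ, hL, Pi.sub_apply, mul_sub]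
              rw [Finset.sum_sub_distrib]
              try ring
            rw [← heq]
            exact hmin (p.1 - p.2)
    -- combine with the transport-entropy inequality
    have hTEν := hTE ν hνprob
    rw [hent] at hTEν
    have hchain := le_trans hW hTEν
    have ha_le : (∫ x, L x ∂ν) - r ≤ (∫ x, fm x ∂ν) - Real.log Z := by
      rcases le_total ((∫ x, L x ∂ν) - r) 0 with h | h
      · linarith
      · exact (ENNReal.ofReal_le_ofReal_iff hHpos).1 hchain
    have hfm_le : ∫ x, fm x ∂ν ≤ ∫ x, g x ∂ν :=
      integral_mono hfmν hgν (fun x => min_le_left _ _)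
    have hgν_eq : ∫ x, g x ∂ν = (∫ x, L x ∂ν) - r := by
      rw [hg]
      rw [integral_sub hLν (integrable_const r), integral_const]
      simp [measure_univ]
    have hlogZ : Real.log Z ≤ 0 := by linarith
    calc Z = exp (Real.log Z) := (Real.exp_log hZpos).symm
      _ ≤ exp 0 := exp_le_exp.2 hlogZ
      _ = 1 := exp_zero
  -- pass to the limit m → ∞
  have hmeasm : ∀ m : ℕ, Measurable fun x => ENNReal.ofReal (exp (min (g x) (m : ℝ))) :=
    fun m => ((hfm_meas m).exp).ennreal_ofReal
  have hmono : Monotone (fun (m : ℕ) => fun x => ENNReal.ofReal (exp (min (g x) (m : ℝ)))) := by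
    intro m m' hmm' x
    exact ENNReal.ofReal_le_ofReal
      (exp_le_exp.2 (min_le_min le_rfl (Nat.cast_le.2 hmm')))
  have hsup : ∀ x, (⨆ m : ℕ, ENNReal.ofReal (exp (min (g x) (m : ℝ))))
      = ENNReal.ofReal (exp (g x)) := by
    intro x
    apply le_antisymm
    · exact iSup_le fun m => ENNReal.ofReal_le_ofReal (exp_le_exp.2 (min_le_left _ _))
    · have hmin' : min (g x) ((⌈g x⌉₊ : ℕ) : ℝ) = g x := min_eq_left (Nat.le_ceil _)
      calc ENNReal.ofReal (exp (g x))
          = ENNReal.ofReal (exp (min (g x) ((⌈g x⌉₊ : ℕ) : ℝ))) := by rw [hmin']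
        _ ≤ ⨆ m : ℕ, ENNReal.ofReal (exp (min (g x) (m : ℝ))) :=
            le_iSup (fun m : ℕ => ENNReal.ofReal (exp (min (g x) (m : ℝ)))) ⌈g x⌉₊
  have hglim : ∫⁻ x, ENNReal.ofReal (exp (g x)) ∂μ ≤ 1 := by
    have h1 : ∫⁻ x, ENNReal.ofReal (exp (g x)) ∂μ
        = ⨆ m : ℕ, ∫⁻ x, ENNReal.ofReal (exp (min (g x) (m : ℝ))) ∂μ := by
      rw [← lintegral_iSup hmeasm hmono]
      exact lintegral_congr fun x => (hsup x).symm
    rw [h1]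
    refine iSup_le fun m => ?_
    rw [← ofReal_integral_eq_lintegral_ofReal (hexp_int m) (ae_of_all _ fun x => (exp_pos _).le)]
    exact ENNReal.ofReal_le_one.2 (key m)
  have hfinal : ∫⁻ x, ENNReal.ofReal (exp (L x)) ∂μ ≤ ENNReal.ofReal (exp r) := by
    have hsplit : ∀ x, ENNReal.ofReal (exp (L x))
        = ENNReal.ofReal (exp r) * ENNReal.ofReal (exp (g x)) := by
      intro x
      rw [← ENNReal.ofReal_mul (exp_pos r).le, ← Real.exp_add]
      congr 2
      rw [hg]
      ring
    simp_rw [hsplit]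
    rw [lintegral_const_mul _ (hgmeas.exp.ennreal_ofReal)]
    calc ENNReal.ofReal (exp r) * ∫⁻ x, ENNReal.ofReal (exp (g x)) ∂μ
        ≤ ENNReal.ofReal (exp r) * 1 := by gcongr
      _ = ENNReal.ofReal (exp r) := mul_one _
  rw [logLaplaceE]
  calc ENNReal.log (∫⁻ x, ENNReal.ofReal (exp (∑ i, ξ i * x i)) ∂μ)
      ≤ ENNReal.log (ENNReal.ofReal (exp r)) := ENNReal.log_monotone hfinal
    _ = (r : EReal) := by rw [ENNReal.log_ofReal_of_pos (exp_pos r), Real.log_exp]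

/-- **Cost functions of difference form are dominated by `Λ*_μ`.** Let `μ` be a centered
probability measure on `ℝⁿ` and `α : ℝⁿ → [0,∞]` proper, lower semi-continuous and
convex. If `μ` satisfies the transportation-entropy inequality with cost
`c(x,y) = α(x-y)`, then `α ≤ Λ*_μ`. -/
theorem cost_le_legendre (n : ℕ) (μ : Measure (Fin n → ℝ)) [IsProbabilityMeasure μ]
    (hmi : ∀ i, Integrable (fun x => x i) μ) (hmean : ∀ i, ∫ x, x i ∂μ = 0)
    (α : (Fin n → ℝ) → ℝ≥0∞) (hlsc : LowerSemicontinuous α) (hproper : ∃ x, α x ≠ ⊤)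
    (hconv : ∀ x y : Fin n → ℝ, ∀ t : ℝ, 0 ≤ t → t ≤ 1 →
      α (t • x + (1 - t) • y) ≤ ENNReal.ofReal t * α x + ENNReal.ofReal (1 - t) * α y)
    (hTE : ∀ ν : Measure (Fin n → ℝ), IsProbabilityMeasure ν →
      transportCost (fun x y => α (x - y)) ν μ ≤ relEntropy ν μ) :
    ∀ x, (α x : EReal) ≤ legendreE n μ x := by
  intro x
  set S : EReal := legendreE n μ x with hSdef
  have hS0 : (0 : EReal) ≤ S := by
    have h2 : logLaplaceE n μ 0 = (0 : EReal) := by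
      rw [logLaplaceE]
      have he : ∀ y : Fin n → ℝ, ENNReal.ofReal (Real.exp (∑ i, (0 : Fin n → ℝ) i * y i))
          = (1 : ℝ≥0∞) := by
        intro y
        simp
      rw [lintegral_congr he, lintegral_one, measure_univ, ENNReal.log_one]
    have h1 : (((∑ i, (0 : Fin n → ℝ) i * x i : ℝ)) : EReal) - logLaplaceE n μ 0 ≤ S :=
      le_iSup (fun ξ => (((∑ i, ξ i * x i : ℝ)) : EReal) - logLaplaceE n μ ξ) 0
    rw [h2] at h1
    simpa using h1
  by_contra hcon
  push_neg at hcon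
  obtain ⟨c, hc1, hc2⟩ := EReal.exists_between_coe_real hcon
  have hc0 : (0 : ℝ) ≤ c := by
    have h3 : (0 : EReal) ≤ (c : EReal) := le_of_lt (lt_of_le_of_lt hS0 hc1)
    exact_mod_cast h3
  have hofR : ENNReal.ofReal c < α x := by
    rw [← EReal.coe_ennreal_lt_coe_ennreal_iff, EReal.coe_ennreal_ofReal, max_eq_left hc0]
    exact hc2
  obtain ⟨ξ, r, hminor, hgt⟩ := aux_exists_minorant n α hlsc hproper hconv x c hc0 hofR
  have hLam := aux_logLaplace_le n μ hmi hmean α hTE ξ r hminor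
  have hterm : ((c : ℝ) : EReal) < (((∑ i, ξ i * x i : ℝ)) : EReal) - logLaplaceE n μ ξ := by
    calc ((c : ℝ) : EReal) < (((∑ i, ξ i * x i) - r : ℝ) : EReal) := by exact_mod_cast hgt
      _ = (((∑ i, ξ i * x i : ℝ)) : EReal) - ((r : ℝ) : EReal) := by rw [EReal.coe_sub]
      _ ≤ _ := EReal.sub_le_sub le_rfl hLam
  have hle : (((∑ i, ξ i * x i : ℝ)) : EReal) - logLaplaceE n μ ξ ≤ S :=
    le_iSup (fun ξ => (((∑ i, ξ i * x i : ℝ)) : EReal) - logLaplaceE n μ ξ) ξ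
  exact absurd (hc1.trans (hterm.trans_le hle)) (lt_irrefl S)
end
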